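/- Let a, b, c ∈ ℝ with c not equal to any nonpositive integer and 2 − c not equal to any nonpositive integer. Define G : (0,1) → ℝ by G(x) = x^{1−c} · F(a−c+1, b−c+1; 2−c; x), where F(a',b';c';x) = Σ_{n≥0} ((a')_n (b')_n / ((c')_n n!)) x^n and (x)_n is the rising factorial. Then for every x ∈ (0,1), G satisfies the hypergeometric differential equation x(1−x)·G''(x) + (c − (a+b+1)x)·G'(x) − a·b·G(x) = 0. -/

import Mathlib

/-!
Write `G(x) = x^{1-c} F(x)` and let `L_{a,b,c}` be the hypergeometric operator. The product rule
gives `L_{a,b,c}[G] = x^{1-c} L_{a',b',c'}[F]` with `a' = a-c+1`, `b' = b-c+1`, `c' = 2-c`, so it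
suffices that `L_{a',b',c'}` annihilates `F = ₂F₁(a', b'; c')` on the unit disc. Since
`F' = (a'b'/c') ₂F₁(a'+1, b'+1; c'+1)`, both `x F'' + c' F'` and `x² F'' + (a'+b'+1) x F' + a'b' F`
expand as `∑ (n+a')(n+b') dₙ xⁿ`, by the recursion `(n+1)(n+c') dₙ₊₁ = (n+a')(n+b') dₙ` of the
coefficients `dₙ` of `F`.
-/

open FormalMultilinearSeries Filter Topology

theorem FormalMultilinearSeries.hasDerivAt_ofScalarsSum {𝕜 : Type*} [NontriviallyNormedField 𝕜]
    [CompleteSpace 𝕜] {c : ℕ → 𝕜} {x : 𝕜} (hx : ‖x‖ₑ < (ofScalars 𝕜 c).radius) :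
    HasDerivAt (ofScalarsSum c) (∑' n, (n + 1) * c (n + 1) * x ^ n) x := by
  set p := ofScalars 𝕜 c
  have hx' : x ∈ Metric.eball 0 p.derivSeries.radius := by
    rw [Metric.mem_eball, edist_zero_right]
    exact hx.trans_le p.radius_le_radius_derivSeries
  have hsum := (p.derivSeries.hasSum hx').mapL (ContinuousLinearMap.apply 𝕜 𝕜 (1 : 𝕜))
  have hterm (n : ℕ) : p.derivSeries n (fun _ => x) 1 = (n + 1) * c (n + 1) * x ^ n := by
    rw [apply_eq_pow_smul_coeff, _root_.smul_apply, derivSeries_coeff_one, coeff_ofScalars,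
      smul_eq_mul, nsmul_eq_mul]
    push_cast
    ring
  simp only [ContinuousLinearMap.apply_apply, hterm] at hsum
  rw [hsum.tsum_eq]
  exact (p.hasFDerivAt_sum hx).hasDerivAt

noncomputable def hypergeometricOperator {𝕜 : Type*} [NontriviallyNormedField 𝕜] (a b c : 𝕜)
    (f : 𝕜 → 𝕜) (x : 𝕜) : 𝕜 :=
  x * (1 - x) * deriv (deriv f) x + (c - (a + b + 1) * x) * deriv f x - a * b * f x

theorem Filter.EventuallyEq.hypergeometricOperator_eq {𝕜 : Type*} [NontriviallyNormedField 𝕜]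
    {a b c x : 𝕜} {f g : 𝕜 → 𝕜} (h : f =ᶠ[𝓝 x] g) :
    hypergeometricOperator a b c f x = hypergeometricOperator a b c g x := by
  rw [hypergeometricOperator, hypergeometricOperator, h.eq_of_nhds, h.deriv_eq, h.deriv.deriv_eq]

theorem hypergeometric_ode_of_hasSum {𝕜 : Type*} [NormedField 𝕜] {a b c x F₀ F₁ F₂ : 𝕜}
    {d : ℕ → 𝕜} (hd : ∀ n : ℕ, (n + 1) * (c + n) * d (n + 1) = (a + n) * (b + n) * d n)
    (h₀ : HasSum (fun n => d n * x ^ n) F₀)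
    (h₁ : HasSum (fun n => (n + 1) * d (n + 1) * x ^ n) F₁)
    (h₂ : HasSum (fun n => (n + 1) * (n + 2) * d (n + 2) * x ^ n) F₂) :
    x * (1 - x) * F₂ + (c - (a + b + 1) * x) * F₁ - a * b * F₀ = 0 := by
  have hx₂F₂ : HasSum (fun n : ℕ => n * (n - 1) * d n * x ^ n) (x ^ 2 * F₂) := by
    rw [← hasSum_nat_add_iff' 2, Finset.sum_range_succ, Finset.sum_range_one]
    simpa using (h₂.mul_left (x ^ 2)).congr_fun fun n => by ring
  have hxF₁ : HasSum (fun n : ℕ => n * d n * x ^ n) (x * F₁) := by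
    rw [← hasSum_nat_add_iff' 1, Finset.sum_range_one]
    simpa using (h₁.mul_left x).congr_fun fun n => by ring
  have hxF₂ : HasSum (fun n : ℕ => n * (n + 1) * d (n + 1) * x ^ n) (x * F₂) := by
    rw [← hasSum_nat_add_iff' 1, Finset.sum_range_one]
    simpa using (h₂.mul_left x).congr_fun fun n => by ring
  have hlow : HasSum (fun n : ℕ => (a + n) * (b + n) * d n * x ^ n) (x * F₂ + c * F₁) :=
    (hxF₂.add (h₁.mul_left c)).congr_fun fun n => by rw [← hd]; ring
  have hhigh : HasSum (fun n : ℕ => (a + n) * (b + n) * d n * x ^ n)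
      (x ^ 2 * F₂ + (a + b + 1) * (x * F₁) + a * b * F₀) :=
    ((hx₂F₂.add (hxF₁.mul_left (a + b + 1))).add (h₀.mul_left (a * b))).congr_fun fun n => by ring
  linear_combination hlow.unique hhigh

theorem hypergeometricOperator_rpow_mul {a b c x : ℝ} {F : ℝ → ℝ} (hx : 0 < x)
    (hF : ∀ᶠ y in 𝓝 x, DifferentiableAt ℝ F y) (hF' : DifferentiableAt ℝ (deriv F) x) :
    hypergeometricOperator a b c (fun y => y ^ (1 - c) * F y) x =
      x ^ (1 - c) * hypergeometricOperator (a - c + 1) (b - c + 1) (2 - c) F x := by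
  have hderiv : deriv (fun y => y ^ (1 - c) * F y) =ᶠ[𝓝 x]
      fun y => (1 - c) * y ^ (1 - c - 1) * F y + y ^ (1 - c) * deriv F y := by
    filter_upwards [hF, lt_mem_nhds hx] with y hFy hy
    exact ((Real.hasDerivAt_rpow_const (Or.inl hy.ne')).mul hFy.hasDerivAt).deriv
  have hderiv₂ : HasDerivAt (fun y => (1 - c) * y ^ (1 - c - 1) * F y + y ^ (1 - c) * deriv F y)
      ((1 - c) * ((1 - c - 1) * x ^ (1 - c - 1 - 1)) * F x + (1 - c) * x ^ (1 - c - 1) * deriv F x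
        + ((1 - c) * x ^ (1 - c - 1) * deriv F x + x ^ (1 - c) * deriv (deriv F) x)) x :=
    (((Real.hasDerivAt_rpow_const (Or.inl hx.ne')).const_mul (1 - c)).mul
      hF.self_of_nhds.hasDerivAt).add
      ((Real.hasDerivAt_rpow_const (Or.inl hx.ne')).mul hF'.hasDerivAt)
  rw [hypergeometricOperator, hypergeometricOperator, hderiv.deriv_eq, hderiv₂.deriv,
    hderiv.eq_of_nhds]
  simp only [Real.rpow_sub_one hx.ne']
  field_simp
  ring

theorem add_one_ne_neg_natCast {R : Type*} [AddCommGroupWithOne R] {c : R} (hc : ∀ k : ℕ, c ≠ -k)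
    (k : ℕ) : c + 1 ≠ -k :=
  fun h => hc (k + 1) (by rw [Nat.cast_succ, neg_add']; exact eq_sub_of_add_eq h)

section Hypergeometric

variable {𝕂 : Type*} [RCLike 𝕂] {a b c x : 𝕂}

theorem one_le_ordinaryHypergeometricSeries_radius (𝔸 : Type*) [NormedDivisionRing 𝔸]
    [NormedAlgebra 𝕂 𝔸] (hc : ∀ k : ℕ, c ≠ -k) :
    1 ≤ (ordinaryHypergeometricSeries 𝔸 a b c).radius := by
  by_cases ha : ∃ k : ℕ, a = -k
  · obtain ⟨k, rfl⟩ := ha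
    simp [ordinaryHypergeometric_radius_top_of_neg_nat₁]
  by_cases hb : ∃ k : ℕ, b = -k
  · obtain ⟨k, rfl⟩ := hb
    simp [ordinaryHypergeometric_radius_top_of_neg_nat₂]
  push Not at ha hb
  refine (ordinaryHypergeometricSeries_radius_eq_one 𝔸 a b c fun k => ?_).ge
  refine ⟨?_, ?_, ?_⟩ <;> intro h
  · exact ha k (by rw [h, neg_neg])
  · exact hb k (by rw [h, neg_neg])
  · exact hc k (by rw [h, neg_neg])

theorem ordinaryHypergeometricCoefficient_succ {n : ℕ} (h : c + n ≠ 0) :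
    (n + 1) * (c + n) * ordinaryHypergeometricCoefficient a b c (n + 1) =
      (a + n) * (b + n) * ordinaryHypergeometricCoefficient a b c n := by
  simp only [ordinaryHypergeometricCoefficient, ascPochhammer_succ_eval, Nat.factorial_succ,
    Nat.cast_mul]
  have : (n : 𝕂) + 1 ≠ 0 := by exact_mod_cast n.succ_ne_zero
  field_simp
  push_cast
  ring

theorem succ_mul_ordinaryHypergeometricCoefficient_succ (n : ℕ) :
    (n + 1) * ordinaryHypergeometricCoefficient a b c (n + 1) =
      a * b / c * ordinaryHypergeometricCoefficient (a + 1) (b + 1) (c + 1) n := by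
  simp only [ordinaryHypergeometricCoefficient, ascPochhammer_succ_left, Polynomial.eval_mul,
    Polynomial.eval_comp, Polynomial.eval_X, Polynomial.eval_add, Polynomial.eval_one,
    Nat.factorial_succ, Nat.cast_mul]
  have : (n : 𝕂) + 1 ≠ 0 := by exact_mod_cast n.succ_ne_zero
  field_simp
  push_cast
  ring

theorem hasSum_ordinaryHypergeometric (hc : ∀ k : ℕ, c ≠ -k) (hx : ‖x‖ < 1) :
    HasSum (fun n => ordinaryHypergeometricCoefficient a b c n * x ^ n) (₂F₁ a b c x) := by
  have hx' : x ∈ Metric.eball 0 (ordinaryHypergeometricSeries 𝕂 a b c).radius := by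
    rw [Metric.mem_eball, edist_zero_right]
    exact lt_of_lt_of_le (by simpa [← ofReal_norm] using hx)
      (one_le_ordinaryHypergeometricSeries_radius 𝕂 hc)
  exact ((ordinaryHypergeometricSeries 𝕂 a b c).hasSum hx').congr_fun fun n =>
    (ordinaryHypergeometricSeries_apply_eq a b c x n).symm

theorem hasDerivAt_ordinaryHypergeometric (hc : ∀ k : ℕ, c ≠ -k) (hx : ‖x‖ < 1) :
    HasDerivAt (₂F₁ a b c) (a * b / c * ₂F₁ (a + 1) (b + 1) (c + 1) x) x := by
  have hx' : ‖x‖ₑ < (ofScalars 𝕂 (ordinaryHypergeometricCoefficient a b c)).radius :=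
    lt_of_lt_of_le (by simpa [← ofReal_norm] using hx)
      (one_le_ordinaryHypergeometricSeries_radius 𝕂 hc)
  have hsum := ((hasSum_ordinaryHypergeometric (a := a + 1) (b := b + 1)
    (add_one_ne_neg_natCast hc) hx).mul_left (a * b / c)).congr_fun fun n => by
      rw [← mul_assoc, ← succ_mul_ordinaryHypergeometricCoefficient_succ]
  rw [← hsum.tsum_eq]
  exact hasDerivAt_ofScalarsSum hx'

theorem deriv_ordinaryHypergeometric_eventuallyEq (hc : ∀ k : ℕ, c ≠ -k) (hx : ‖x‖ < 1) :
    deriv (₂F₁ a b c) =ᶠ[𝓝 x] fun y => a * b / c * ₂F₁ (a + 1) (b + 1) (c + 1) y := by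
  filter_upwards [Metric.isOpen_ball.mem_nhds (mem_ball_zero_iff.2 hx)] with y hy
  exact (hasDerivAt_ordinaryHypergeometric hc (mem_ball_zero_iff.1 hy)).deriv

theorem hasDerivAt_deriv_ordinaryHypergeometric (hc : ∀ k : ℕ, c ≠ -k) (hx : ‖x‖ < 1) :
    HasDerivAt (deriv (₂F₁ a b c))
      (a * b / c * ((a + 1) * (b + 1) / (c + 1) * ₂F₁ (a + 1 + 1) (b + 1 + 1) (c + 1 + 1) x)) x :=
  ((hasDerivAt_ordinaryHypergeometric (add_one_ne_neg_natCast hc) hx).const_mul _)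
    |>.congr_of_eventuallyEq (deriv_ordinaryHypergeometric_eventuallyEq hc hx)

theorem hypergeometricOperator_ordinaryHypergeometric (hc : ∀ k : ℕ, c ≠ -k) (hx : ‖x‖ < 1) :
    hypergeometricOperator a b c (₂F₁ a b c) x = 0 := by
  set d := ordinaryHypergeometricCoefficient a b c
  have hc₁ := add_one_ne_neg_natCast hc
  have hd (n : ℕ) : (n + 1) * (c + n) * d (n + 1) = (a + n) * (b + n) * d n :=
    ordinaryHypergeometricCoefficient_succ fun h => hc n (eq_neg_of_add_eq_zero_left h)
  have h₁ : HasSum (fun n => (n + 1) * d (n + 1) * x ^ n)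
      (a * b / c * ₂F₁ (a + 1) (b + 1) (c + 1) x) :=
    ((hasSum_ordinaryHypergeometric hc₁ hx).mul_left _).congr_fun fun n => by
      rw [succ_mul_ordinaryHypergeometricCoefficient_succ, mul_assoc]
  have h₂ : HasSum (fun n => (n + 1) * (n + 2) * d (n + 2) * x ^ n)
      (a * b / c * ((a + 1) * (b + 1) / (c + 1) * ₂F₁ (a + 1 + 1) (b + 1 + 1) (c + 1 + 1) x)) := by
    refine (((hasSum_ordinaryHypergeometric (add_one_ne_neg_natCast hc₁) hx).mul_left _).mul_left
      _).congr_fun fun n => ?_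
    have hd₁ : ((n : 𝕂) + 2) * d (n + 2) =
        a * b / c * ordinaryHypergeometricCoefficient (a + 1) (b + 1) (c + 1) (n + 1) := by
      rw [← succ_mul_ordinaryHypergeometricCoefficient_succ]
      push_cast
      ring
    linear_combination ((n : 𝕂) + 1) * x ^ n * hd₁ +
      a * b / c * x ^ n *
        succ_mul_ordinaryHypergeometricCoefficient_succ (a := a + 1) (b := b + 1) (c := c + 1) n
  rw [hypergeometricOperator, (hasDerivAt_deriv_ordinaryHypergeometric hc hx).deriv,
    (hasDerivAt_ordinaryHypergeometric hc hx).deriv]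
  exact hypergeometric_ode_of_hasSum hd (hasSum_ordinaryHypergeometric hc hx) h₁ h₂

end Hypergeometric

theorem second_hypergeometric_solution_satisfies_ode_general (a b c : ℝ)
    (hc' : ∀ k : ℕ, 2 - c ≠ -(k : ℝ)) (G : ℝ → ℝ)
    (hG : ∀ x ∈ Set.Ioo (0 : ℝ) 1, G x = x ^ (1 - c) * ∑' n : ℕ,
      (ascPochhammer ℝ n).eval (a - c + 1) * (ascPochhammer ℝ n).eval (b - c + 1) /
        ((ascPochhammer ℝ n).eval (2 - c) * (n.factorial : ℝ)) * x ^ n) :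
    ∀ x ∈ Set.Ioo (0 : ℝ) 1,
      x * (1 - x) * deriv (deriv G) x + (c - (a + b + 1) * x) * deriv G x
        - a * b * G x = 0 := by
  intro x hx
  have hx₁ : ‖x‖ < 1 := by rw [Real.norm_eq_abs, abs_lt]; exact ⟨by linarith [hx.1], hx.2⟩
  have hGF : G =ᶠ[𝓝 x] fun y => y ^ (1 - c) * ₂F₁ (a - c + 1) (b - c + 1) (2 - c) y := by
    filter_upwards [isOpen_Ioo.mem_nhds hx] with y hy
    rw [hG y hy, ordinaryHypergeometric_eq_tsum]
    congr 1
    exact tsum_congr fun n => by rw [smul_eq_mul]; ring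
  have hF : ∀ᶠ y in 𝓝 x, DifferentiableAt ℝ (₂F₁ (a - c + 1) (b - c + 1) (2 - c)) y := by
    filter_upwards [Metric.isOpen_ball.mem_nhds (mem_ball_zero_iff.2 hx₁)] with y hy
    exact (hasDerivAt_ordinaryHypergeometric hc' (mem_ball_zero_iff.1 hy)).differentiableAt
  change hypergeometricOperator a b c G x = 0
  rw [hGF.hypergeometricOperator_eq, hypergeometricOperator_rpow_mul hx.1 hF
    (hasDerivAt_deriv_ordinaryHypergeometric hc' hx₁).differentiableAt,
    hypergeometricOperator_ordinaryHypergeometric hc' hx₁, mul_zero]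

theorem second_hypergeometric_solution_satisfies_ode (a b c : ℝ)
    (hc : ∀ k : ℕ, c ≠ -(k : ℝ)) (hc' : ∀ k : ℕ, 2 - c ≠ -(k : ℝ)) (G : ℝ → ℝ)
    (hG : ∀ x ∈ Set.Ioo (0 : ℝ) 1, G x = x ^ (1 - c) * ∑' n : ℕ,
      (ascPochhammer ℝ n).eval (a - c + 1) * (ascPochhammer ℝ n).eval (b - c + 1) /
        ((ascPochhammer ℝ n).eval (2 - c) * (n.factorial : ℝ)) * x ^ n) :
    ∀ x ∈ Set.Ioo (0 : ℝ) 1,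
      x * (1 - x) * deriv (deriv G) x + (c - (a + b + 1) * x) * deriv G x
        - a * b * G x = 0 :=
  second_hypergeometric_solution_satisfies_ode_general a b c hc' G hG
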